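/- Let k be an odd positive integer and let K be a commuting subgroup of the phase-less Pauli group P̂_k with dim K = k (i.e. |K| = 2^k). Then at least one of the following holds: (1) there exists Q ∈ K whose representative i^ℓ·Q_1⊗⋯⊗Q_k has Q_j ∈ {I, Y} for every j ∈ [k] and the number of j with Q_j = Y is odd; or (2) there exists P ∈ K whose representative i^ℓ·Q_1⊗⋯⊗Q_k has an odd number of indices j with Q_j ∈ {X, Z}. -/

import Mathlib

open Matrix

noncomputable section

/-- The space of `n`-qubit operators (2^n × 2^n complex matrices, indexed by bit strings). -/
abbrev QMat (n : ℕ) := Matrix (Fin n → Fin 2) (Fin n → Fin 2) ℂ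

/-- The space of `n`-qubit state vectors (ℂ^{2^n}, indexed by bit strings). -/
abbrev QVec (n : ℕ) := (Fin n → Fin 2) → ℂ

def PauliX : Matrix (Fin 2) (Fin 2) ℂ := !![0, 1; 1, 0]
def PauliY : Matrix (Fin 2) (Fin 2) ℂ := !![0, -Complex.I; Complex.I, 0]
def PauliZ : Matrix (Fin 2) (Fin 2) ℂ := !![1, 0; 0, -1]

/-- `Q` is one of the four single-qubit Pauli matrices `I, X, Y, Z`. -/
def IsSingleQubitPauli (Q : Matrix (Fin 2) (Fin 2) ℂ) : Prop :=
  Q = 1 ∨ Q = PauliX ∨ Q = PauliY ∨ Q = PauliZ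

/-- Kronecker product, in qubit order, of `n` single-qubit operators. -/
def tensorn (n : ℕ) (Q : Fin n → Matrix (Fin 2) (Fin 2) ℂ) : QMat n :=
  fun x y => ∏ j, Q j (x j) (y j)

/-- `P` is an element of the `n`-qubit Pauli group: `P = i^ℓ · Q_1 ⊗ ⋯ ⊗ Q_n`. -/
def IsPauli {n : ℕ} (P : QMat n) : Prop :=
  ∃ (ℓ : Fin 4) (Q : Fin n → Matrix (Fin 2) (Fin 2) ℂ),
    (∀ j, IsSingleQubitPauli (Q j)) ∧ P = (Complex.I ^ (ℓ : ℕ)) • tensorn n Q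

lemma tensorn_one (n : ℕ) : tensorn n (fun _ => (1 : Matrix (Fin 2) (Fin 2) ℂ)) = 1 := by
  ext x y
  by_cases h : x = y
  · subst h
    simp [tensorn, Matrix.one_apply]
  · have hj : ∃ j, x j ≠ y j := by
      by_contra hc
      push_neg at hc
      exact h (funext hc)
    obtain ⟨j, hj⟩ := hj
    rw [tensorn, Matrix.one_apply]
    rw [if_neg h]
    exact Finset.prod_eq_zero (Finset.mem_univ j) (by simp [Matrix.one_apply, hj])

lemma tensorn_mul {n : ℕ} (Q R : Fin n → Matrix (Fin 2) (Fin 2) ℂ) :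
    tensorn n Q * tensorn n R = tensorn n (fun j => Q j * R j) := by
  ext x y
  simp only [tensorn, Matrix.mul_apply]
  rw [Finset.prod_univ_sum (fun _ => (Finset.univ : Finset (Fin 2)))
    (fun j b => Q j (x j) b * R j b (y j))]
  rw [Fintype.piFinset_univ]
  exact Finset.sum_congr rfl fun z _ => (Finset.prod_mul_distrib).symm

lemma IsSingleQubitPauli.mul_self {Q : Matrix (Fin 2) (Fin 2) ℂ}
    (h : IsSingleQubitPauli Q) : Q * Q = 1 := by
  rcases h with h | h | h | h <;> subst h
  · simp
  · rw [PauliX, Matrix.mul_fin_two, Matrix.one_fin_two]; norm_num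
  · rw [PauliY, Matrix.mul_fin_two, Matrix.one_fin_two]; norm_num [Complex.I_mul_I]
  · rw [PauliZ, Matrix.mul_fin_two, Matrix.one_fin_two]; norm_num

/-- The invertible `n`-qubit operators. -/
abbrev MatU (n : ℕ) := (QMat n)ˣ

/-- The `n`-qubit Pauli group, as a subgroup of the invertible 2^n × 2^n matrices. -/
def PauliGrp (n : ℕ) : Subgroup (MatU n) :=
  Subgroup.closure {u : MatU n | IsPauli (u : QMat n)}

/-- The matrix `i·I` as a unit. -/
def phaseUnit (n : ℕ) : MatU n :=
  Units.map (algebraMap ℂ (QMat n)).toMonoidHom (Units.mk0 Complex.I Complex.I_ne_zero)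

lemma phaseUnit_isPauli (n : ℕ) : IsPauli ((phaseUnit n : MatU n) : QMat n) := by
  refine ⟨1, fun _ => 1, fun _ => Or.inl rfl, ?_⟩
  rw [tensorn_one]
  show algebraMap ℂ (QMat n) Complex.I = _
  rw [Algebra.algebraMap_eq_smul_one]
  norm_num

lemma phaseUnit_mem (n : ℕ) : phaseUnit n ∈ PauliGrp n :=
  Subgroup.subset_closure (phaseUnit_isPauli n)

def phaseElt (n : ℕ) : ↥(PauliGrp n) := ⟨phaseUnit n, phaseUnit_mem n⟩

/-- The subgroup `⟨iI⟩` of the Pauli group. -/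
def phaseSub (n : ℕ) : Subgroup ↥(PauliGrp n) := Subgroup.zpowers (phaseElt n)

lemma phaseUnit_comm {n : ℕ} (g : MatU n) : g * phaseUnit n = phaseUnit n * g := by
  refine Units.ext ?_
  show (g : QMat n) * (algebraMap ℂ (QMat n) Complex.I) =
    (algebraMap ℂ (QMat n) Complex.I) * (g : QMat n)
  exact (Algebra.commutes Complex.I (g : QMat n)).symm

instance phaseSub_normal (n : ℕ) : (phaseSub n).Normal := by
  constructor
  intro h hmem g
  obtain ⟨k, hk⟩ := Subgroup.mem_zpowers_iff.mp hmem
  have hc0 : Commute g (phaseElt n) := Subtype.ext (phaseUnit_comm (g : MatU n))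
  have hc : Commute g h := hk ▸ hc0.zpow_right k
  have hgh : g * h * g⁻¹ = h := by
    rw [hc.eq, mul_assoc, mul_inv_cancel, mul_one]
  rw [hgh]
  exact hmem

/-- The phase-less Pauli group `P̂_n = P_n / ⟨iI⟩`. -/
abbrev PhaselessPauli (n : ℕ) := ↥(PauliGrp n) ⧸ phaseSub n

/-- Two phase-less Pauli operators commute if (any, equivalently every, pair of)
representatives commute as matrices. -/
def PCommute {n : ℕ} (x y : PhaselessPauli n) : Prop :=
  ∃ P Q : ↥(PauliGrp n), QuotientGroup.mk P = x ∧ QuotientGroup.mk Q = y ∧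
    ((P : MatU n) : QMat n) * ((Q : MatU n) : QMat n) =
      ((Q : MatU n) : QMat n) * ((P : MatU n) : QMat n)

/-- A commuting subgroup of the phase-less Pauli group `P̂_n`: all pairs of elements
commute. -/
def IsCommutingSubgroup {n : ℕ} (M : Subgroup (PhaselessPauli n)) : Prop :=
  ∀ x ∈ M, ∀ y ∈ M, PCommute x y


/-!
Label the Pauli operator `c • X^a Z^b` (with `a b : Fin k → ZMod 2`, acting factorwise) by
`(a, b) ∈ 𝔽₂^{2k}`. Modulo phases this is an injective group homomorphism, and two Pauli
operators commute iff their labels are orthogonal for the symplectic form. So `K` becomes an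
isotropic subspace of dimension `k` of `𝔽₂^{2k}`, hence a Lagrangian: `K^⊥ = K`. Pairing a label
with the all-ones vector, the label of `Y ⊗ ⋯ ⊗ Y`, gives the parity of the number of `X` and `Z`
factors. Either this pairing is odd on some element of `K`, which is alternative (2), or the
all-ones vector lies in `K^⊥ = K`, so `Y ⊗ ⋯ ⊗ Y` (with `k` odd factors `Y`) lies in `K`.
-/
lemma ZMod.two_eq_zero_or_one : ∀ a : ZMod 2, a = 0 ∨ a = 1 := by decide

lemma odd_ncard_setOf_eq_one_of_sum_ne_zero {ι : Type*} [Fintype ι] (f : ι → ZMod 2)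
    (h : ∑ i, f i ≠ 0) : Odd {i | f i = 1}.ncard := by
  classical
  have hf : ∀ i, f i = if f i = 1 then 1 else 0 := fun i => by
    rcases ZMod.two_eq_zero_or_one (f i) with h | h <;> simp [h]
  rw [Finset.sum_congr rfl fun i _ => hf i, Finset.sum_boole] at h
  rw [← ZMod.natCast_eq_one_iff_odd, Set.ncard_eq_toFinset_card']
  simp [(ZMod.two_eq_zero_or_one _).resolve_left h]

def signChar : AddChar (ZMod 2) ℂ where
  toFun a := if a = 0 then 1 else -1
  map_zero_eq_one' := if_pos rfl
  map_add_eq_mul' a b := by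
    rcases ZMod.two_eq_zero_or_one a with rfl | rfl <;>
      rcases ZMod.two_eq_zero_or_one b with rfl | rfl <;>
        simp [CharTwo.add_self_eq_zero]

lemma signChar_sum {ι : Type*} (s : Finset ι) (f : ι → ZMod 2) :
    signChar (∑ i ∈ s, f i) = ∏ i ∈ s, signChar (f i) := by
  classical
  induction s using Finset.induction_on with
  | empty => simp
  | insert i s hi ih =>
    rw [Finset.sum_insert hi, Finset.prod_insert hi, AddChar.map_add_eq_mul, ih]

lemma signChar_injective : Function.Injective signChar := by
  intro a b h
  rcases ZMod.two_eq_zero_or_one a with rfl | rfl <;>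
    rcases ZMod.two_eq_zero_or_one b with rfl | rfl <;> first | rfl | norm_num [signChar] at h

lemma signChar_sq (a : ZMod 2) : signChar a ^ 2 = 1 := by
  rw [← AddChar.map_nsmul_eq_pow, ZModModule.char_nsmul_eq_zero, AddChar.map_zero_eq_one]

lemma signChar_ne_zero (a : ZMod 2) : signChar a ≠ 0 :=
  fun h => by simpa [h] using signChar_sq a

lemma exists_eq_I_pow_of_pow_four_eq_one {c : ℂ} (h : c ^ 4 = 1) :
    ∃ ℓ : Fin 4, c = Complex.I ^ (ℓ : ℕ) := by
  have h4 : (c - 1) * (c + 1) * (c - Complex.I) * (c + Complex.I) = 0 := by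
    linear_combination h - (c ^ 2 - 1) * Complex.I_sq
  simp only [mul_eq_zero, sub_eq_zero, add_eq_zero_iff_eq_neg] at h4
  rcases h4 with ((rfl | rfl) | rfl) | rfl
  exacts [⟨0, by simp⟩, ⟨2, by simp⟩, ⟨1, by simp⟩, ⟨3, by simp [pow_succ]⟩]

/-- `X^a Z^b`: it differs from `pauliOf a b` only by a phase, but multiplies by the simple rule
`weylMat_mul`. -/
def weylMat (a b : ZMod 2) : Matrix (Fin 2) (Fin 2) ℂ := PauliX ^ a.val * PauliZ ^ b.val

lemma weylMat_zero_zero : weylMat 0 0 = 1 := by simp [weylMat]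
lemma weylMat_one_zero : weylMat 1 0 = PauliX := by simp [weylMat, ZMod.val_one]
lemma weylMat_zero_one : weylMat 0 1 = PauliZ := by simp [weylMat, ZMod.val_one]
lemma weylMat_one_one : weylMat 1 1 = PauliX * PauliZ := by simp [weylMat, ZMod.val_one]

lemma weylMat_mul (a b a' b' : ZMod 2) :
    weylMat a b * weylMat a' b' = signChar (b * a') • weylMat (a + a') (b + b') := by
  rcases ZMod.two_eq_zero_or_one a with rfl | rfl <;>
    rcases ZMod.two_eq_zero_or_one b with rfl | rfl <;>
    rcases ZMod.two_eq_zero_or_one a' with rfl | rfl <;>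
    rcases ZMod.two_eq_zero_or_one b' with rfl | rfl <;>
    simp only [CharTwo.add_self_eq_zero, add_zero, zero_add, mul_zero, mul_one,
      weylMat_zero_zero, weylMat_one_zero, weylMat_zero_one, weylMat_one_one,
      AddChar.map_zero_eq_one, one_smul] <;>
    · ext i j
      fin_cases i <;> fin_cases j <;>
        simp [signChar, PauliX, PauliZ, Matrix.mul_apply, Matrix.one_apply, Fin.sum_univ_succ]

lemma trace_weylMat (a b : ZMod 2) : (weylMat a b).trace = if a = 0 ∧ b = 0 then 2 else 0 := by
  rcases ZMod.two_eq_zero_or_one a with rfl | rfl <;>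
    rcases ZMod.two_eq_zero_or_one b with rfl | rfl <;>
    simp [weylMat_zero_zero, weylMat_one_zero, weylMat_zero_one, weylMat_one_one, PauliX, PauliZ,
      Matrix.trace_fin_two]

def pauliOf (a b : ZMod 2) : Matrix (Fin 2) (Fin 2) ℂ :=
  if a = 0 then (if b = 0 then 1 else PauliZ) else (if b = 0 then PauliX else PauliY)

lemma pauliOf_one_one : pauliOf 1 1 = PauliY := rfl

lemma isSingleQubitPauli_pauliOf (a b : ZMod 2) : IsSingleQubitPauli (pauliOf a b) := by
  unfold pauliOf IsSingleQubitPauli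
  split_ifs <;> simp

lemma IsSingleQubitPauli.exists_eq_pauliOf {Q : Matrix (Fin 2) (Fin 2) ℂ}
    (h : IsSingleQubitPauli Q) : ∃ a b : ZMod 2, Q = pauliOf a b := by
  rcases h with rfl | rfl | rfl | rfl
  exacts [⟨0, 0, rfl⟩, ⟨1, 0, rfl⟩, ⟨1, 1, rfl⟩, ⟨0, 1, rfl⟩]

lemma weylMat_eq_smul_pauliOf (a b : ZMod 2) :
    ∃ c : ℂ, c ^ 4 = 1 ∧ weylMat a b = c • pauliOf a b := by
  rcases ZMod.two_eq_zero_or_one a with rfl | rfl <;>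
    rcases ZMod.two_eq_zero_or_one b with rfl | rfl
  · exact ⟨1, one_pow 4, by rw [weylMat_zero_zero, one_smul]; rfl⟩
  · exact ⟨1, one_pow 4, by rw [weylMat_zero_one, one_smul]; rfl⟩
  · exact ⟨1, one_pow 4, by rw [weylMat_one_zero, one_smul]; rfl⟩
  · refine ⟨-Complex.I, by rw [neg_pow, Complex.I_pow_four]; norm_num, ?_⟩
    rw [weylMat_one_one, pauliOf_one_one]
    ext i j
    fin_cases i <;> fin_cases j <;>
      simp [PauliX, PauliY, PauliZ, Matrix.mul_apply, Fin.sum_univ_succ]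

lemma pauliOf_eq_pauliX_or_pauliZ_iff (a b : ZMod 2) :
    (pauliOf a b = PauliX ∨ pauliOf a b = PauliZ) ↔ a + b = 1 := by
  have h1X : (1 : Matrix (Fin 2) (Fin 2) ℂ) ≠ PauliX := fun h => by
    simpa [PauliX] using congrFun₂ h 0 1
  have h1Z : (1 : Matrix (Fin 2) (Fin 2) ℂ) ≠ PauliZ := fun h => by
    have h11 := congrFun₂ h 1 1
    norm_num [PauliZ] at h11
  have hYX : PauliY ≠ PauliX := fun h => by
    simpa [PauliX, PauliY, Complex.ext_iff] using congrFun₂ h 0 1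
  have hYZ : PauliY ≠ PauliZ := fun h => by simpa [PauliY, PauliZ] using congrFun₂ h 0 0
  rcases ZMod.two_eq_zero_or_one a with rfl | rfl <;>
    rcases ZMod.two_eq_zero_or_one b with rfl | rfl <;>
    simp [pauliOf, h1X, h1Z, hYX, hYZ, CharTwo.add_self_eq_zero]

lemma tensorn_smul {n : ℕ} (c : Fin n → ℂ) (Q : Fin n → Matrix (Fin 2) (Fin 2) ℂ) :
    tensorn n (fun j => c j • Q j) = (∏ j, c j) • tensorn n Q := by
  ext x y
  simp [tensorn, Finset.prod_mul_distrib]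

lemma trace_tensorn {n : ℕ} (Q : Fin n → Matrix (Fin 2) (Fin 2) ℂ) :
    (tensorn n Q).trace = ∏ j, (Q j).trace := by
  simp only [Matrix.trace, Matrix.diag, tensorn]
  rw [Finset.prod_univ_sum, Fintype.piFinset_univ]

abbrev PauliVec (n : ℕ) := (Fin n → ZMod 2) × (Fin n → ZMod 2)

def weylOp {n : ℕ} (v : PauliVec n) : QMat n := tensorn n fun j => weylMat (v.1 j) (v.2 j)

lemma weylOp_zero {n : ℕ} : weylOp (0 : PauliVec n) = 1 := by
  simp only [weylOp, Prod.fst_zero, Prod.snd_zero, Pi.zero_apply, weylMat_zero_zero, tensorn_one]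

lemma weylOp_mul {n : ℕ} (v w : PauliVec n) :
    weylOp v * weylOp w = signChar (v.2 ⬝ᵥ w.1) • weylOp (v + w) := by
  simp only [weylOp, tensorn_mul, weylMat_mul, tensorn_smul, dotProduct, signChar_sum]
  rfl

lemma trace_weylOp {n : ℕ} (v : PauliVec n) :
    (weylOp v).trace = if v = 0 then 2 ^ n else 0 := by
  split_ifs with hv
  · simp [hv, weylOp_zero, Matrix.trace_one]
  · obtain ⟨j, hj⟩ : ∃ j, v.1 j ≠ 0 ∨ v.2 j ≠ 0 := by
      by_contra! h
      exact hv (Prod.ext (funext fun j => (h j).1) (funext fun j => (h j).2))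
    rw [weylOp, trace_tensorn]
    exact Finset.prod_eq_zero (Finset.mem_univ j) (by rw [trace_weylMat, if_neg]; tauto)

lemma smul_weylOp_inj {n : ℕ} {c c' : ℂ} {v w : PauliVec n} (hc : c ≠ 0)
    (h : c • weylOp v = c' • weylOp w) : v = w ∧ c = c' := by
  -- `trace (weylOp w * weylOp v)` vanishes unless `w = v`
  have key := congrArg (fun M => (M * weylOp v).trace) h
  simp only [smul_mul_assoc, weylOp_mul, Matrix.trace_smul, trace_weylOp, ZModModule.add_self,
    if_true, smul_eq_mul, add_eq_zero_iff_eq_neg, ZModModule.neg_eq_self] at key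
  have hsign : ∀ a, signChar a * 2 ^ n ≠ 0 := fun a =>
    mul_ne_zero (signChar_ne_zero a) (by norm_num)
  obtain rfl : v = w := by
    by_contra hvw
    rw [if_neg (Ne.symm hvw), mul_zero, mul_zero] at key
    exact mul_ne_zero hc (hsign _) key
  rw [if_pos rfl] at key
  exact ⟨rfl, mul_right_cancel₀ (hsign _) key⟩

lemma pauliOf_eq_smul_weylMat (a b : ZMod 2) :
    ∃ c : ℂ, c ^ 4 = 1 ∧ pauliOf a b = c • weylMat a b := by
  obtain ⟨c, hc, h⟩ := weylMat_eq_smul_pauliOf a b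
  have hc0 : c ≠ 0 := ne_zero_pow four_ne_zero (hc ▸ one_ne_zero)
  exact ⟨c⁻¹, by rw [inv_pow, hc, inv_one],
    by rw [h, smul_smul, inv_mul_cancel₀ hc0, one_smul]⟩

lemma IsPauli.exists_eq_smul_weylOp {n : ℕ} {P : QMat n} (h : IsPauli P) :
    ∃ (c : ℂ) (v : PauliVec n), c ^ 4 = 1 ∧ P = c • weylOp v := by
  obtain ⟨ℓ, Q, hQ, rfl⟩ := h
  choose a b hab using fun j => (hQ j).exists_eq_pauliOf
  choose c hc hpauli using fun j => pauliOf_eq_smul_weylMat (a j) (b j)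
  refine ⟨Complex.I ^ (ℓ : ℕ) * ∏ j, c j, (a, b), ?_, ?_⟩
  · rw [mul_pow, ← pow_mul, mul_comm (ℓ : ℕ), pow_mul, Complex.I_pow_four, one_pow, one_mul,
      ← Finset.prod_pow, Finset.prod_eq_one fun j _ => hc j]
  · have hQ : Q = fun j => c j • weylMat (a j) (b j) := funext fun j => (hab j).trans (hpauli j)
    rw [hQ, tensorn_smul, smul_smul]
    rfl

lemma smul_weylOp_eq_I_pow_smul_tensorn {n : ℕ} {c : ℂ} (hc : c ^ 4 = 1) (v : PauliVec n) :
    ∃ ℓ : Fin 4,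
      c • weylOp v = Complex.I ^ (ℓ : ℕ) • tensorn n fun j => pauliOf (v.1 j) (v.2 j) := by
  choose d hd hweyl using fun j => weylMat_eq_smul_pauliOf (v.1 j) (v.2 j)
  obtain ⟨ℓ, hℓ⟩ := exists_eq_I_pow_of_pow_four_eq_one (c := c * ∏ j, d j) (by
    rw [mul_pow, hc, one_mul, ← Finset.prod_pow, Finset.prod_eq_one fun j _ => hd j])
  have hv : (fun j => weylMat (v.1 j) (v.2 j)) = fun j => d j • pauliOf (v.1 j) (v.2 j) :=
    funext hweyl
  exact ⟨ℓ, by rw [← hℓ, weylOp, hv, tensorn_smul, smul_smul]⟩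

def weylGroup (n : ℕ) : Subgroup (MatU n) where
  carrier := {u | ∃ (c : ℂ) (v : PauliVec n), c ^ 4 = 1 ∧ (u : QMat n) = c • weylOp v}
  one_mem' := ⟨1, 0, one_pow 4, by rw [weylOp_zero, one_smul]; rfl⟩
  mul_mem' := by
    rintro u u' ⟨c, v, hc, hu⟩ ⟨c', w, hc', hu'⟩
    refine ⟨c * c' * signChar (v.2 ⬝ᵥ w.1), v + w, ?_, ?_⟩
    · rw [mul_pow, mul_pow, hc, hc', show 4 = 2 * 2 from rfl, pow_mul, signChar_sq]
      norm_num
    · rw [Units.val_mul, hu, hu', smul_mul_smul_comm, weylOp_mul, smul_smul]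
  inv_mem' := by
    rintro u ⟨c, v, hc, hu⟩
    have hc0 : c ≠ 0 := ne_zero_pow four_ne_zero (hc ▸ one_ne_zero)
    refine ⟨c⁻¹ * signChar (v.2 ⬝ᵥ v.1), v, ?_, Units.inv_eq_of_mul_eq_one_right ?_⟩
    · rw [mul_pow, inv_pow, hc, show 4 = 2 * 2 from rfl, pow_mul, signChar_sq]
      norm_num
    · rw [hu, smul_mul_smul_comm, weylOp_mul, ZModModule.add_self, weylOp_zero, smul_smul,
        mul_inv_cancel_left₀ hc0, ← sq, signChar_sq, one_smul]

lemma exists_coe_eq_smul_weylOp {n : ℕ} (u : PauliGrp n) :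
    ∃ (c : ℂ) (v : PauliVec n), c ^ 4 = 1 ∧ ((u : MatU n) : QMat n) = c • weylOp v :=
  (Subgroup.closure_le (weylGroup n)).mpr (fun _ hu => IsPauli.exists_eq_smul_weylOp hu) u.2

def symplecticForm (R ι : Type*) [CommRing R] [Fintype ι] :
    LinearMap.BilinForm R ((ι → R) × (ι → R)) :=
  LinearMap.mk₂ R (fun v w => v.1 ⬝ᵥ w.2 - v.2 ⬝ᵥ w.1)
    (fun _ _ _ => by simp only [Prod.fst_add, Prod.snd_add, add_dotProduct]; ring)
    (fun _ _ _ => by simp only [Prod.smul_fst, Prod.smul_snd, smul_dotProduct, smul_sub])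
    (fun _ _ _ => by simp only [Prod.fst_add, Prod.snd_add, dotProduct_add]; ring)
    (fun _ _ _ => by simp only [Prod.smul_fst, Prod.smul_snd, dotProduct_smul, smul_sub])

section symplecticForm

variable {R ι : Type*} [CommRing R] [Fintype ι]

lemma symplecticForm_apply (v w : (ι → R) × (ι → R)) :
    symplecticForm R ι v w = v.1 ⬝ᵥ w.2 - v.2 ⬝ᵥ w.1 := rfl

lemma symplecticForm_isAlt : LinearMap.IsAlt (symplecticForm R ι) := fun v => by
  rw [symplecticForm_apply, dotProduct_comm, sub_self]

lemma symplecticForm_nondegenerate : (symplecticForm R ι).Nondegenerate := by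
  classical
  refine symplecticForm_isAlt.isRefl.nondegenerate_iff_separatingLeft.mpr fun v hv => ?_
  ext j
  · simpa [symplecticForm_apply] using hv (0, Pi.single j 1)
  · simpa [symplecticForm_apply] using hv (Pi.single j 1, 0)

end symplecticForm

lemma LinearMap.BilinForm.orthogonal_eq_self_of_isotropic {K V : Type*} [Field K] [AddCommGroup V]
    [Module K V] [FiniteDimensional K V] {B : LinearMap.BilinForm K V} (hB : B.Nondegenerate)
    {W : Submodule K V} (hW : ∀ v ∈ W, ∀ w ∈ W, B v w = 0)
    (hdim : 2 * Module.finrank K W = Module.finrank K V) : B.orthogonal W = W := by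
  have hle : W ≤ B.orthogonal W := fun w hw => B.mem_orthogonal_iff.mpr fun v hv => hW v hv w hw
  refine (Submodule.eq_of_le_of_finrank_le hle ?_).symm
  rw [B.finrank_orthogonal hB]
  omega

lemma symplecticForm_eq_zero_of_commute {n : ℕ} {c c' : ℂ} {v w : PauliVec n} (hc : c ≠ 0)
    (hc' : c' ≠ 0) (h : Commute (c • weylOp v) (c' • weylOp w)) :
    symplecticForm (ZMod 2) (Fin n) v w = 0 := by
  rw [Commute, SemiconjBy, smul_mul_smul_comm, smul_mul_smul_comm, weylOp_mul, weylOp_mul,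
    smul_smul, smul_smul, add_comm w] at h
  have hscalar := (smul_weylOp_inj (mul_ne_zero (mul_ne_zero hc hc') (signChar_ne_zero _)) h).2
  have hsign : signChar (v.2 ⬝ᵥ w.1) = signChar (w.2 ⬝ᵥ v.1) :=
    mul_left_cancel₀ (mul_ne_zero hc hc') (hscalar.trans (by ring))
  rw [symplecticForm_apply, dotProduct_comm v.1, signChar_injective hsign, sub_self]

lemma odd_ncard_pauliOf_eq_pauliX_or_pauliZ {n : ℕ} (v : PauliVec n)
    (h : symplecticForm (ZMod 2) (Fin n) v 1 ≠ 0) :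
    Odd {j | pauliOf (v.1 j) (v.2 j) = PauliX ∨ pauliOf (v.1 j) (v.2 j) = PauliZ}.ncard := by
  simp_rw [pauliOf_eq_pauliX_or_pauliZ_iff]
  refine odd_ncard_setOf_eq_one_of_sum_ne_zero _ ?_
  simpa [symplecticForm_apply, dotProduct_one, Finset.sum_add_distrib,
    ZModModule.sub_eq_add] using h

def pauliVecOf {n : ℕ} (u : PauliGrp n) : PauliVec n :=
  (exists_coe_eq_smul_weylOp u).choose_spec.choose

lemma exists_coe_eq_smul_weylOp_pauliVecOf {n : ℕ} (u : PauliGrp n) :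
    ∃ c : ℂ, c ^ 4 = 1 ∧ ((u : MatU n) : QMat n) = c • weylOp (pauliVecOf u) :=
  ⟨_, (exists_coe_eq_smul_weylOp u).choose_spec.choose_spec⟩

lemma pauliVecOf_eq {n : ℕ} {u : PauliGrp n} {c : ℂ} {v : PauliVec n}
    (h : ((u : MatU n) : QMat n) = c • weylOp v) : pauliVecOf u = v := by
  obtain ⟨c', hc', hu⟩ := exists_coe_eq_smul_weylOp_pauliVecOf u
  exact (smul_weylOp_inj (ne_zero_pow four_ne_zero (hc' ▸ one_ne_zero)) (hu.symm.trans h)).1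

def pauliLabel (n : ℕ) : PauliGrp n →* Multiplicative (PauliVec n) where
  toFun u := .ofAdd (pauliVecOf u)
  map_one' := congrArg _ (pauliVecOf_eq (c := 1) (by rw [weylOp_zero, one_smul]; rfl))
  map_mul' u u' := by
    obtain ⟨c, hc, hu⟩ := exists_coe_eq_smul_weylOp_pauliVecOf u
    obtain ⟨c', hc', hu'⟩ := exists_coe_eq_smul_weylOp_pauliVecOf u'
    rw [← ofAdd_add]
    exact congrArg Multiplicative.ofAdd (pauliVecOf_eq (by
      rw [Subgroup.coe_mul, Units.val_mul, hu, hu', smul_mul_smul_comm, weylOp_mul, smul_smul]))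

lemma coe_phaseElt_zpow {n : ℕ} (m : ℤ) :
    (((phaseElt n ^ m : PauliGrp n) : MatU n) : QMat n) = Complex.I ^ m • 1 := by
  change ((phaseUnit n ^ m : MatU n) : QMat n) = _
  rw [phaseUnit, ← map_zpow]
  change algebraMap ℂ (QMat n) ((Units.mk0 Complex.I Complex.I_ne_zero ^ m : ℂˣ) : ℂ) = _
  rw [Units.val_zpow_eq_zpow_val, Units.val_mk0, Algebra.algebraMap_eq_smul_one]

lemma ker_pauliLabel (n : ℕ) : (pauliLabel n).ker = phaseSub n := by
  ext u
  rw [MonoidHom.mem_ker, phaseSub, Subgroup.mem_zpowers_iff]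
  constructor
  · intro hu
    obtain ⟨c, hc, hcoe⟩ := exists_coe_eq_smul_weylOp_pauliVecOf u
    obtain ⟨ℓ, rfl⟩ := exists_eq_I_pow_of_pow_four_eq_one hc
    refine ⟨ℓ, Subtype.ext (Units.ext ?_)⟩
    rw [coe_phaseElt_zpow, hcoe, show pauliVecOf u = 0 from hu, weylOp_zero, zpow_natCast]
  · rintro ⟨m, rfl⟩
    exact congrArg Multiplicative.ofAdd
      (pauliVecOf_eq (by rw [coe_phaseElt_zpow, weylOp_zero]))

def phaselessLabel (n : ℕ) : PhaselessPauli n →* Multiplicative (PauliVec n) :=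
  QuotientGroup.lift (phaseSub n) (pauliLabel n) (ker_pauliLabel n).ge

lemma phaselessLabel_injective (n : ℕ) : Function.Injective (phaselessLabel n) := by
  refine (injective_iff_map_eq_one _).mpr fun x hx => ?_
  obtain ⟨u, rfl⟩ := QuotientGroup.mk_surjective x
  exact (QuotientGroup.eq_one_iff u).mpr (ker_pauliLabel n ▸ hx)

lemma PhaselessPauli.exists_mk_eq_I_pow_smul_tensorn {n : ℕ} (x : PhaselessPauli n) :
    ∃ P : PauliGrp n, QuotientGroup.mk P = x ∧ ∃ ℓ : Fin 4,
      ((P : MatU n) : QMat n) = Complex.I ^ (ℓ : ℕ) • tensorn n fun j =>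
        pauliOf ((phaselessLabel n x).toAdd.1 j) ((phaselessLabel n x).toAdd.2 j) := by
  obtain ⟨P, rfl⟩ := QuotientGroup.mk_surjective x
  obtain ⟨c, hc, hP⟩ := exists_coe_eq_smul_weylOp_pauliVecOf P
  obtain ⟨ℓ, hℓ⟩ := smul_weylOp_eq_I_pow_smul_tensorn hc (pauliVecOf P)
  exact ⟨P, rfl, ℓ, hP.trans hℓ⟩

lemma PCommute.symplecticForm_eq_zero {n : ℕ} {x y : PhaselessPauli n} (h : PCommute x y) :
    symplecticForm (ZMod 2) (Fin n) (phaselessLabel n x).toAdd (phaselessLabel n y).toAdd = 0 := by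
  obtain ⟨P, Q, rfl, rfl, hPQ⟩ := h
  obtain ⟨c, hc, hP⟩ := exists_coe_eq_smul_weylOp_pauliVecOf P
  obtain ⟨c', hc', hQ⟩ := exists_coe_eq_smul_weylOp_pauliVecOf Q
  rw [hP, hQ] at hPQ
  exact symplecticForm_eq_zero_of_commute (ne_zero_pow four_ne_zero (hc ▸ one_ne_zero))
    (ne_zero_pow four_ne_zero (hc' ▸ one_ne_zero)) hPQ

def labelSubspace {n : ℕ} (K : Subgroup (PhaselessPauli n)) : Submodule (ZMod 2) (PauliVec n) :=
  AddSubgroup.toZModSubmodule 2 (K.map (phaselessLabel n)).toAddSubgroup'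

lemma mem_labelSubspace {n : ℕ} {K : Subgroup (PhaselessPauli n)} {v : PauliVec n} :
    v ∈ labelSubspace K ↔ ∃ x ∈ K, phaselessLabel n x = .ofAdd v := by
  rw [labelSubspace, AddSubgroup.mem_toZModSubmodule, Subgroup.mem_toAddSubgroup', Subgroup.mem_map]

lemma two_pow_finrank_labelSubspace {n : ℕ} (K : Subgroup (PhaselessPauli n)) :
    2 ^ Module.finrank (ZMod 2) (labelSubspace K) = Nat.card K := by
  have hcard := Module.natCard_eq_pow_finrank (K := ZMod 2) (V := labelSubspace K)
  rw [Nat.card_zmod] at hcard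
  rw [← Subgroup.card_map_of_injective (phaselessLabel_injective n), ← hcard]
  rfl

lemma IsCommutingSubgroup.symplecticForm_labelSubspace {n : ℕ} {K : Subgroup (PhaselessPauli n)}
    (hK : IsCommutingSubgroup K) :
    ∀ v ∈ labelSubspace K, ∀ w ∈ labelSubspace K,
      symplecticForm (ZMod 2) (Fin n) v w = 0 := by
  intro v hv w hw
  obtain ⟨x, hx, hxv⟩ := mem_labelSubspace.mp hv
  obtain ⟨y, hy, hyw⟩ := mem_labelSubspace.mp hw
  simpa [hxv, hyw] using (hK x hx y hy).symplecticForm_eq_zero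

theorem maximal_commuting_subgroup_odd_general (k : ℕ) (hk : Odd k)
    (K : Subgroup (PhaselessPauli k)) (hcomm : IsCommutingSubgroup K)
    (hcard : Nat.card K = 2 ^ k) :
    (∃ Q ∈ K, ∃ P : ↥(PauliGrp k), QuotientGroup.mk P = Q ∧
      ∃ (ℓ : Fin 4) (F : Fin k → Matrix (Fin 2) (Fin 2) ℂ),
        (∀ j, IsSingleQubitPauli (F j)) ∧
        ((P : MatU k) : QMat k) = (Complex.I ^ (ℓ : ℕ)) • tensorn k F ∧
        (∀ j, F j = 1 ∨ F j = PauliY) ∧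
        Odd (Set.ncard {j : Fin k | F j = PauliY})) ∨
    (∃ Q ∈ K, ∃ P : ↥(PauliGrp k), QuotientGroup.mk P = Q ∧
      ∃ (ℓ : Fin 4) (F : Fin k → Matrix (Fin 2) (Fin 2) ℂ),
        (∀ j, IsSingleQubitPauli (F j)) ∧
        ((P : MatU k) : QMat k) = (Complex.I ^ (ℓ : ℕ)) • tensorn k F ∧
        Odd (Set.ncard {j : Fin k | F j = PauliX ∨ F j = PauliZ})) := by
  set B := symplecticForm (ZMod 2) (Fin k)
  have hLagrangian : B.orthogonal (labelSubspace K) = labelSubspace K := by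
    refine LinearMap.BilinForm.orthogonal_eq_self_of_isotropic symplecticForm_nondegenerate
      hcomm.symplecticForm_labelSubspace ?_
    have := (two_pow_finrank_labelSubspace K).trans hcard
    rw [Nat.pow_right_injective le_rfl this, Module.finrank_prod, Module.finrank_fin_fun]
    ring
  by_cases hodd : ∃ x ∈ K, B (phaselessLabel k x).toAdd 1 ≠ 0
  · right
    obtain ⟨x, hx, hxY⟩ := hodd
    obtain ⟨P, hP, ℓ, hPeq⟩ := x.exists_mk_eq_I_pow_smul_tensorn
    exact ⟨x, hx, P, hP, ℓ, _, fun j => isSingleQubitPauli_pauliOf _ _, hPeq,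
      odd_ncard_pauliOf_eq_pauliX_or_pauliZ _ hxY⟩
  · left
    push Not at hodd
    have hY : (1 : PauliVec k) ∈ labelSubspace K := hLagrangian ▸ B.mem_orthogonal_iff.mpr
      fun v hv => by obtain ⟨x, hx, rfl⟩ := mem_labelSubspace.mp hv; exact hodd x hx
    obtain ⟨x, hx, hxY⟩ := mem_labelSubspace.mp hY
    obtain ⟨P, hP, ℓ, hPeq⟩ := x.exists_mk_eq_I_pow_smul_tensorn
    rw [hxY] at hPeq
    refine ⟨x, hx, P, hP, ℓ, fun _ => PauliY, fun _ => Or.inr (Or.inr (Or.inl rfl)), hPeq,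
      fun _ => Or.inr rfl, ?_⟩
    simpa using hk

/-- a maximal commuting subgroup `K ≤ P̂_k` (with `|K| = 2^k`, `k` odd)
contains either an element whose factors lie in `{I, Y}` with an odd number of `Y`'s, or
an element with an odd total number of `X`'s and `Z`'s. -/
theorem maximal_commuting_subgroup_odd (k : ℕ) (hk : Odd k) (hk0 : 0 < k)
    (K : Subgroup (PhaselessPauli k)) (hcomm : IsCommutingSubgroup K)
    (hcard : Nat.card K = 2 ^ k) :
    (∃ Q ∈ K, ∃ P : ↥(PauliGrp k), QuotientGroup.mk P = Q ∧
      ∃ (ℓ : Fin 4) (F : Fin k → Matrix (Fin 2) (Fin 2) ℂ),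
        (∀ j, IsSingleQubitPauli (F j)) ∧
        ((P : MatU k) : QMat k) = (Complex.I ^ (ℓ : ℕ)) • tensorn k F ∧
        (∀ j, F j = 1 ∨ F j = PauliY) ∧
        Odd (Set.ncard {j : Fin k | F j = PauliY})) ∨
    (∃ Q ∈ K, ∃ P : ↥(PauliGrp k), QuotientGroup.mk P = Q ∧
      ∃ (ℓ : Fin 4) (F : Fin k → Matrix (Fin 2) (Fin 2) ℂ),
        (∀ j, IsSingleQubitPauli (F j)) ∧
        ((P : MatU k) : QMat k) = (Complex.I ^ (ℓ : ℕ)) • tensorn k F ∧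
        Odd (Set.ncard {j : Fin k | F j = PauliX ∨ F j = PauliZ})) :=
  maximal_commuting_subgroup_odd_general k hk K hcomm hcard
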